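/- arXiv:2311.14261 — 10 statements merged into one kernel-verified Lean document; each statement's English description precedes it below -/
import Mathlib

section
/- Let L be a dcpo and let 𝒜 be a Scott closed subset of the complete lattice H(L) of all Scott closed subsets of L (ordered by inclusion). Then the union ⋃𝒜 is a Scott closed subset of L. -/
universe u

/-- A subset is Scott open: an upper set inaccessible by directed suprema. -/
def ScottOpen {α : Type u} [Preorder α] (U : Set α) : Prop :=
  IsUpperSet U ∧ ∀ d : Set α, d.Nonempty → DirectedOn (· ≤ ·) d →
    ∀ a : α, IsLUB d a → a ∈ U → (d ∩ U).Nonempty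

/-- A subset is Scott closed: a lower set closed under directed suprema. -/
def ScottClosed {α : Type u} [Preorder α] (C : Set α) : Prop :=
  IsLowerSet C ∧ ∀ d : Set α, d ⊆ C → d.Nonempty → DirectedOn (· ≤ ·) d →
    ∀ a : α, IsLUB d a → a ∈ C

/-- A dcpo: every nonempty directed subset has a supremum. -/
def IsDcpo (α : Type u) [Preorder α] : Prop :=
  ∀ d : Set α, d.Nonempty → DirectedOn (· ≤ ·) d → ∃ a, IsLUB d a

/-- Compactness with respect to the Scott topology. -/
def ScottCompact {α : Type u} [Preorder α] (K : Set α) : Prop :=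
  ∀ 𝒰 : Set (Set α), (∀ U ∈ 𝒰, ScottOpen U) → K ⊆ ⋃₀ 𝒰 →
    ∃ F : Set (Set α), F ⊆ 𝒰 ∧ F.Finite ∧ K ⊆ ⋃₀ F

/-- Well-filteredness of the Scott topology of a poset. -/
def WellFiltered (α : Type u) [Preorder α] : Prop :=
  ∀ 𝒞 : Set (Set α), 𝒞.Nonempty →
    (∀ K ∈ 𝒞, ScottCompact K ∧ IsUpperSet K) →
    DirectedOn (fun A B : Set α => B ⊆ A) 𝒞 →
    ∀ U : Set α, ScottOpen U → ⋂₀ 𝒞 ⊆ U → ∃ K ∈ 𝒞, K ⊆ U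

/-- The Hoare power construction: Scott closed subsets ordered by inclusion. -/
structure HPoset (α : Type u) [Preorder α] where
  carrier : Set α
  closed' : ScottClosed carrier

instance {α : Type u} [Preorder α] : PartialOrder (HPoset α) where
  le A B := A.carrier ⊆ B.carrier
  le_refl _ := subset_rfl
  le_trans _ _ _ h h' := Set.Subset.trans h h'
  le_antisymm A B h h' := by
    cases A; cases B
    simp only [HPoset.mk.injEq]
    exact subset_antisymm h h'

/-- The Smyth power construction: nonempty Scott compact saturated subsets
ordered by reverse inclusion. -/
structure QPoset (α : Type u) [Preorder α] where
  carrier : Set α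
  nonempty' : carrier.Nonempty
  compact' : ScottCompact carrier
  upper' : IsUpperSet carrier

instance {α : Type u} [Preorder α] : PartialOrder (QPoset α) where
  le K K' := K'.carrier ⊆ K.carrier
  le_refl _ := subset_rfl
  le_trans _ _ _ h h' := Set.Subset.trans h' h
  le_antisymm K K' h h' := by
    cases K; cases K'
    simp only [QPoset.mk.injEq]
    exact subset_antisymm h' h

/-- The lattice of Scott open subsets ordered by inclusion. -/
structure OpenSet (α : Type u) [Preorder α] where
  carrier : Set α
  open' : ScottOpen carrier

instance {α : Type u} [Preorder α] : PartialOrder (OpenSet α) where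
  le A B := A.carrier ⊆ B.carrier
  le_refl _ := subset_rfl
  le_trans _ _ _ h h' := Set.Subset.trans h h'
  le_antisymm A B h h' := by
    cases A; cases B
    simp only [OpenSet.mk.injEq]
    exact subset_antisymm h h'

/-!
If a directed set `d` lies in `⋃ 𝒜`, then each principal ideal `↓x`, `x ∈ d`, lies in some member
of `𝒜`, hence in `𝒜` because `𝒜` is a lower set. These ideals form a directed family in `H(L)`
whose join is the Scott closure of `d`; as `𝒜` is closed under directed joins, that closure belongs
to `𝒜`, and it contains every supremum of `d`.
-/

section ScottClosed

variable {α : Type u} [Preorder α]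

theorem scottClosed_Iic (x : α) : ScottClosed (Set.Iic x) :=
  ⟨isLowerSet_Iic x, fun _ hd _ _ _ ha => ha.2 hd⟩

theorem scottClosed_sInter {𝒮 : Set (Set α)} (h𝒮 : ∀ E ∈ 𝒮, ScottClosed E) :
    ScottClosed (⋂₀ 𝒮) :=
  ⟨isLowerSet_sInter fun E hE => (h𝒮 E hE).1,
    fun d hd hne hdir a ha => Set.mem_sInter.2 fun E hE =>
      (h𝒮 E hE).2 d (fun _ hx => Set.mem_sInter.1 (hd hx) E hE) hne hdir a ha⟩

end ScottClosed

namespace HPoset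

variable {α : Type u} [Preorder α]

def Iic (x : α) : HPoset α := ⟨Set.Iic x, scottClosed_Iic x⟩

theorem Iic_mono : Monotone (Iic : α → HPoset α) :=
  fun _ _ hxy _ hz => le_trans hz hxy

def closure (s : Set α) : HPoset α :=
  ⟨⋂₀ {E | ScottClosed E ∧ s ⊆ E}, scottClosed_sInter fun _ hE => hE.1⟩

theorem subset_closure (s : Set α) : s ⊆ (closure s).carrier :=
  fun _ hx => Set.mem_sInter.2 fun _ hE => hE.2 hx

theorem closure_le {s : Set α} {A : HPoset α} (hs : s ⊆ A.carrier) : closure s ≤ A :=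
  Set.sInter_subset_of_mem ⟨A.closed', hs⟩

theorem isLUB_image_Iic_closure (s : Set α) : IsLUB (Iic '' s) (closure s) := by
  refine ⟨?_, fun A hA => closure_le fun x hx => hA ⟨x, hx, rfl⟩ le_rfl⟩
  rintro _ ⟨x, hx, rfl⟩
  exact fun _ hy => (closure s).closed'.1 hy (subset_closure s hx)

theorem Iic_mem_of_mem_biUnion {𝒜 : Set (HPoset α)} (h𝒜 : IsLowerSet 𝒜) {x : α}
    (hx : x ∈ ⋃ A ∈ 𝒜, A.carrier) : Iic x ∈ 𝒜 := by
  obtain ⟨A, hA, hxA⟩ := Set.mem_iUnion₂.1 hx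
  exact h𝒜 (show Iic x ≤ A from fun _ hy => A.closed'.1 hy hxA) hA

end HPoset

theorem hoare_union_scottClosed_general {L : Type u} [PartialOrder L]
    (𝒜 : Set (HPoset L)) (h𝒜 : ScottClosed 𝒜) :
    ScottClosed (⋃ A ∈ 𝒜, A.carrier) := by
  refine ⟨isLowerSet_iUnion₂ fun A _ => A.closed'.1, fun d hd hne hdir a ha => ?_⟩
  have hIic : HPoset.Iic '' d ⊆ 𝒜 := by
    rintro _ ⟨x, hx, rfl⟩
    exact HPoset.Iic_mem_of_mem_biUnion h𝒜.1 (hd hx)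
  have hclosure : HPoset.closure d ∈ 𝒜 :=
    h𝒜.2 _ hIic (hne.image _) (hdir.mono_comp fun _ _ h => HPoset.Iic_mono h) _
      (HPoset.isLUB_image_Iic_closure d)
  have ha : a ∈ (HPoset.closure d).carrier :=
    (HPoset.closure d).closed'.2 d (HPoset.subset_closure d) hne hdir a ha
  exact Set.mem_iUnion₂_of_mem hclosure ha

theorem hoare_union_scottClosed {L : Type u} [PartialOrder L] (hL : IsDcpo L)
    (𝒜 : Set (HPoset L)) (h𝒜 : ScottClosed 𝒜) :
    ScottClosed (⋃ A ∈ 𝒜, A.carrier) :=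
  hoare_union_scottClosed_general 𝒜 h𝒜
end

section
/- Let L be a well-filtered dcpo and let 𝒦 be a Scott compact saturated subset of Q(L), where Q(L) is the poset of all nonempty Scott compact saturated subsets of L ordered by reverse inclusion. Then ⋃𝒦 is a compact saturated subset of L with respect to the Scott topology. -/
universe u

/-!
Let `𝒰` be a Scott open cover of `⋃ 𝒦`. Each `K ∈ 𝒦` is covered by a finite `F ⊆ 𝒰`, that is,
`K` lies in the box `□(⋃₀ F) = {K' | K' ⊆ ⋃₀ F}`. By well-filteredness, `□U` is Scott open in
`Q(L)` for every Scott open `U`: the intersection of a directed family in `Q(L)` is again a member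
of `Q(L)` bounding the family above, so if the supremum lies in `□U` then this intersection lies in
`U`, and hence so does some member. Compactness of `𝒦` then selects finitely many boxes, and the
corresponding finite subfamilies of `𝒰` together cover `⋃ 𝒦`.
-/

section ScottOpen

variable {α : Type u} [Preorder α]

lemma scottOpen_empty : ScottOpen (∅ : Set α) :=
  ⟨isUpperSet_empty, fun _ _ _ _ _ ha => absurd ha (Set.notMem_empty _)⟩

lemma scottOpen_sUnion {S : Set (Set α)} (hS : ∀ U ∈ S, ScottOpen U) : ScottOpen (⋃₀ S) := by
  refine ⟨isUpperSet_sUnion fun U hU => (hS U hU).1, ?_⟩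
  rintro d hd hdir a ha ⟨U, hU, haU⟩
  obtain ⟨x, hxd, hxU⟩ := (hS U hU).2 d hd hdir a ha haU
  exact ⟨x, hxd, U, hU, hxU⟩

end ScottOpen

namespace WellFiltered

variable {α : Type u} [Preorder α] (hw : WellFiltered α) {𝒞 : Set (Set α)}
  (hne : 𝒞.Nonempty) (h𝒞 : ∀ K ∈ 𝒞, ScottCompact K ∧ IsUpperSet K)
  (hdir : DirectedOn (fun A B : Set α => B ⊆ A) 𝒞)
include hw hne h𝒞 hdir

lemma sInter_nonempty (hK : ∀ K ∈ 𝒞, K.Nonempty) : (⋂₀ 𝒞).Nonempty := by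
  rw [Set.nonempty_iff_ne_empty]
  intro hempty
  obtain ⟨K, hK𝒞, hKe⟩ := hw 𝒞 hne h𝒞 hdir ∅ scottOpen_empty hempty.subset
  exact (hK K hK𝒞).ne_empty (Set.subset_empty_iff.mp hKe)

lemma scottCompact_sInter : ScottCompact (⋂₀ 𝒞) := by
  intro 𝒰 h𝒰 hcov
  obtain ⟨K, hK𝒞, hK𝒰⟩ := hw 𝒞 hne h𝒞 hdir _ (scottOpen_sUnion h𝒰) hcov
  obtain ⟨F, hF𝒰, hFfin, hKF⟩ := (h𝒞 K hK𝒞).1 𝒰 h𝒰 hK𝒰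
  exact ⟨F, hF𝒰, hFfin, (Set.sInter_subset_of_mem hK𝒞).trans hKF⟩

end WellFiltered

namespace QPoset

variable {α : Type u} [Preorder α]

def box (U : Set α) : Set (QPoset α) := {K | K.carrier ⊆ U}

lemma isUpperSet_biUnion_carrier (𝒦 : Set (QPoset α)) : IsUpperSet (⋃ K ∈ 𝒦, K.carrier) :=
  isUpperSet_iUnion₂ fun K _ => K.upper'

lemma directedOn_image_carrier {d : Set (QPoset α)} (hdir : DirectedOn (· ≤ ·) d) :
    DirectedOn (fun A B : Set α => B ⊆ A) (carrier '' d) :=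
  directedOn_image.2 hdir

lemma scottCompact_and_isUpperSet_of_mem_image_carrier {d : Set (QPoset α)} :
    ∀ K ∈ carrier '' d, ScottCompact K ∧ IsUpperSet K := by
  rintro _ ⟨K, -, rfl⟩
  exact ⟨K.compact', K.upper'⟩

def sInter (hw : WellFiltered α) (d : Set (QPoset α)) (hne : d.Nonempty)
    (hdir : DirectedOn (· ≤ ·) d) : QPoset α where
  carrier := ⋂₀ (carrier '' d)
  nonempty' := hw.sInter_nonempty (hne.image _)
    scottCompact_and_isUpperSet_of_mem_image_carrier (directedOn_image_carrier hdir)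
    (by rintro _ ⟨K, -, rfl⟩; exact K.nonempty')
  compact' := hw.scottCompact_sInter (hne.image _)
    scottCompact_and_isUpperSet_of_mem_image_carrier (directedOn_image_carrier hdir)
  upper' := isUpperSet_sInter (by rintro _ ⟨K, -, rfl⟩; exact K.upper')

lemma sInter_mem_upperBounds (hw : WellFiltered α) {d : Set (QPoset α)} (hne : d.Nonempty)
    (hdir : DirectedOn (· ≤ ·) d) : sInter hw d hne hdir ∈ upperBounds d :=
  fun K hK => Set.sInter_subset_of_mem ⟨K, hK, rfl⟩

lemma scottOpen_box (hw : WellFiltered α) {U : Set α} (hU : ScottOpen U) :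
    ScottOpen (box U) := by
  refine ⟨fun K K' hKK' hK => Set.Subset.trans hKK' hK, ?_⟩
  intro d hne hdir a ha haU
  have hsInter : ⋂₀ (carrier '' d) ⊆ U :=
    Set.Subset.trans (ha.2 (sInter_mem_upperBounds hw hne hdir)) haU
  obtain ⟨_, ⟨K, hKd, rfl⟩, hKU⟩ := hw _ (hne.image _)
    scottCompact_and_isUpperSet_of_mem_image_carrier (directedOn_image_carrier hdir) U hU hsInter
  exact ⟨K, hKd, hKU⟩

lemma scottCompact_biUnion_carrier (hw : WellFiltered α) {𝒦 : Set (QPoset α)}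
    (h𝒦 : ScottCompact 𝒦) : ScottCompact (⋃ K ∈ 𝒦, K.carrier) := by
  intro 𝒰 h𝒰 hcov
  let 𝔉 : Set (Set (Set α)) := {F | F ⊆ 𝒰 ∧ F.Finite}
  have hboxes_open : ∀ V ∈ (fun F => box (⋃₀ F)) '' 𝔉, ScottOpen V := by
    rintro _ ⟨F, hF, rfl⟩
    exact scottOpen_box hw (scottOpen_sUnion fun U hU => h𝒰 U (hF.1 hU))
  have hboxes_cover : 𝒦 ⊆ ⋃₀ ((fun F => box (⋃₀ F)) '' 𝔉) := by
    intro K hK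
    obtain ⟨F, hF𝒰, hFfin, hKF⟩ :=
      K.compact' 𝒰 h𝒰 fun x hx => hcov (Set.mem_biUnion hK hx)
    exact ⟨_, ⟨F, ⟨hF𝒰, hFfin⟩, rfl⟩, hKF⟩
  obtain ⟨𝔊, h𝔊𝔉, h𝔊fin, h𝒦𝔊⟩ :=
    Set.exists_subset_image_finite_and.1 (h𝒦 _ hboxes_open hboxes_cover)
  refine ⟨⋃₀ 𝔊, Set.sUnion_subset fun F hF => (h𝔊𝔉 hF).1,
    h𝔊fin.sUnion fun F hF => (h𝔊𝔉 hF).2, ?_⟩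
  rintro x ⟨_, ⟨K, rfl⟩, _, ⟨hK, rfl⟩, hxK⟩
  obtain ⟨_, ⟨F, hF𝔊, rfl⟩, hKF⟩ := h𝒦𝔊 hK
  obtain ⟨U, hUF, hxU⟩ := hKF hxK
  exact ⟨U, ⟨F, hF𝔊, hUF⟩, hxU⟩

end QPoset

theorem smyth_union_compact_saturated_general {L : Type u} [PartialOrder L]
    (hw : WellFiltered L)
    (𝒦 : Set (QPoset L)) (hc : ScottCompact 𝒦) :
    ScottCompact (⋃ K ∈ 𝒦, K.carrier) ∧ IsUpperSet (⋃ K ∈ 𝒦, K.carrier) :=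
  ⟨QPoset.scottCompact_biUnion_carrier hw hc, QPoset.isUpperSet_biUnion_carrier 𝒦⟩

theorem smyth_union_compact_saturated {L : Type u} [PartialOrder L]
    (hd : IsDcpo L) (hw : WellFiltered L)
    (𝒦 : Set (QPoset L)) (hc : ScottCompact 𝒦) (hu : IsUpperSet 𝒦) :
    ScottCompact (⋃ K ∈ 𝒦, K.carrier) ∧ IsUpperSet (⋃ K ∈ 𝒦, K.carrier) :=
  smyth_union_compact_saturated_general hw 𝒦 hc
end

section
/- Every complete lattice endowed with its Scott topology is a coherent space: the intersection of any two compact saturated subsets is compact. -/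
universe u

/-! For `K` compact and `W` open, the set of `x` with `x ⊔ K ⊆ W` is open: if a directed
supremum `a` lies in it, the sets `{y | x ⊔ y ∈ W}` for `x` in the directed set form a directed
open cover of `K`, since joins preserve directed suprema. As `K₁` and `K₂` are upper sets,
`x ⊔ y ∈ K₁ ∩ K₂` for `x ∈ K₁`, `y ∈ K₂`. So, given an open cover of `K₁ ∩ K₂`, each `x ∈ K₁`
satisfies `x ⊔ K₂ ⊆ ⋃ F` for a finite subfamily `F`; these open conditions are directed in `F`,
so one `F` serves all of `K₁`, and `z = z ⊔ z` puts `K₁ ∩ K₂` inside `⋃ F`. -/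

section ScottOpen

variable {α β : Type u} [Preorder α] [Preorder β]

theorem ScottOpen.preimage {f : α → β} (hf : ScottContinuous f) {W : Set β}
    (hW : ScottOpen W) : ScottOpen (f ⁻¹' W) := by
  refine ⟨hW.1.preimage hf.monotone, fun d hd hdir a ha haW => ?_⟩
  obtain ⟨_, ⟨x, hx, rfl⟩, hxW⟩ :=
    hW.2 (f '' d) (hd.image f) (hdir.mono_comp hf.monotone) (f a) (hf hd hdir ha) haW
  exact ⟨x, hx, hxW⟩

theorem ScottOpen.iUnion {ι : Sort*} {U : ι → Set α} (hU : ∀ i, ScottOpen (U i)) :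
    ScottOpen (⋃ i, U i) := by
  refine ⟨isUpperSet_iUnion fun i => (hU i).1, fun d hd hdir a ha haU => ?_⟩
  obtain ⟨i, hai⟩ := Set.mem_iUnion.1 haU
  obtain ⟨x, hxd, hxU⟩ := (hU i).2 d hd hdir a ha hai
  exact ⟨x, hxd, Set.mem_iUnion.2 ⟨i, hxU⟩⟩

end ScottOpen

section ScottCompact

variable {α : Type u} [Preorder α] {K : Set α} {ι : Type*}

theorem ScottCompact.elim_finite_subcover (hK : ScottCompact K) (U : ι → Set α)
    (hU : ∀ i, ScottOpen (U i)) (hKU : K ⊆ ⋃ i, U i) : ∃ t : Finset ι, K ⊆ ⋃ i ∈ t, U i := by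
  obtain ⟨F, hFU, hF, hKF⟩ :=
    hK (Set.range U) (Set.forall_mem_range.2 hU) (by rwa [Set.sUnion_range])
  rw [← Set.image_univ] at hFU
  obtain ⟨s, -, hs, rfl⟩ := Set.exists_subset_image_finite_and.1 ⟨F, hFU, hF, rfl⟩
  exact ⟨hs.toFinset, by simpa using hKF⟩

theorem ScottCompact.elim_directed_cover [Nonempty ι] (hK : ScottCompact K) (U : ι → Set α)
    (hU : ∀ i, ScottOpen (U i)) (hKU : K ⊆ ⋃ i, U i) (hdir : Directed (· ⊆ ·) U) :
    ∃ i, K ⊆ U i := by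
  obtain ⟨t, ht⟩ := hK.elim_finite_subcover U hU hKU
  obtain ⟨i, hi⟩ := hdir.finset_le t
  exact ⟨i, ht.trans (Set.iUnion₂_subset hi)⟩

end ScottCompact

theorem ScottCompact.scottOpen_setOf_forall_sup_mem {α : Type u} [SemilatticeSup α]
    {K W : Set α} (hK : ScottCompact K) (hW : ScottOpen W) :
    ScottOpen {x | ∀ y ∈ K, x ⊔ y ∈ W} := by
  have hW_mono {x x' y : α} (hx : x ≤ x') (hxy : x ⊔ y ∈ W) : x' ⊔ y ∈ W :=
    hW.1 (sup_le_sup_right hx y) hxy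
  refine ⟨fun x x' hx hxK y hy => hW_mono hx (hxK y hy), fun d hd hdir a ha haK => ?_⟩
  have hcover : K ⊆ ⋃ x : d, {y | (x : α) ⊔ y ∈ W} := by
    intro y hy
    obtain ⟨x, hxd, hxy⟩ :=
      (hW.preimage (f := (· ⊔ y)) (by fun_prop)).2 d hd hdir a ha (haK y hy)
    exact Set.mem_iUnion.2 ⟨⟨x, hxd⟩, hxy⟩
  have : Nonempty d := hd.to_subtype
  obtain ⟨x, hxK⟩ := hK.elim_directed_cover _ (fun x => hW.preimage (by fun_prop)) hcover
    (hdir.directed_val.mono_comp (· ≤ ·) (g := fun x : α => {y | x ⊔ y ∈ W})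
      fun _ _ hx _ => hW_mono hx)
  exact ⟨x, x.2, hxK⟩

theorem completeLattice_scott_coherent {L : Type u} [CompleteLattice L]
    (K₁ K₂ : Set L) (h₁ : ScottCompact K₁) (hu₁ : IsUpperSet K₁)
    (h₂ : ScottCompact K₂) (hu₂ : IsUpperSet K₂) :
    ScottCompact (K₁ ∩ K₂) := by
  intro 𝒰 h𝒰 hcov
  let V (t : Finset 𝒰) : Set L := {x | ∀ y ∈ K₂, x ⊔ y ∈ ⋃ U ∈ t, (U : Set L)}
  have hV_open (t : Finset 𝒰) : ScottOpen (V t) :=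
    h₂.scottOpen_setOf_forall_sup_mem <|
      ScottOpen.iUnion fun U => ScottOpen.iUnion fun _ => h𝒰 U U.2
  have hV_mono : Monotone V := fun t t' htt' x hx y hy =>
    Set.biUnion_subset_biUnion_left htt' (hx y hy)
  have hK₁ : K₁ ⊆ ⋃ t, V t := by
    intro x hx
    have hK₂ : K₂ ⊆ ⋃ U : 𝒰, {y | x ⊔ y ∈ (U : Set L)} := fun y hy => by
      obtain ⟨U, hU, hxy⟩ := hcov ⟨hu₁ le_sup_left hx, hu₂ le_sup_right hy⟩
      exact Set.mem_iUnion.2 ⟨⟨U, hU⟩, hxy⟩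
    obtain ⟨t, ht⟩ :=
      h₂.elim_finite_subcover (fun U : 𝒰 => {y | x ⊔ y ∈ (U : Set L)})
        (fun U => (h𝒰 U U.2).preimage (by fun_prop)) hK₂
    exact Set.mem_iUnion.2 ⟨t, fun y hy => by simpa using ht hy⟩
  obtain ⟨t, hK₁t⟩ := h₁.elim_directed_cover V hV_open hK₁ hV_mono.directed_le
  refine ⟨(↑) '' (t : Set 𝒰), by simp, t.finite_toSet.image _, fun z hz => ?_⟩
  have hz_mem : z ∈ ⋃ U ∈ t, (U : Set L) := sup_idem z ▸ hK₁t hz.1 z hz.2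
  simpa [Set.sUnion_image] using hz_mem
end

section
/- In a well-filtered coherent T0 space, the intersection of any nonempty family of compact saturated subsets is compact saturated. -/
/-!
Let `𝒞` be the family of finite nonempty intersections of members of `𝒮`. By coherence its
members are compact saturated, it is filtered, and `⋂₀ 𝒞 = ⋂₀ 𝒮`. Given an open cover of
`⋂₀ 𝒮`, well-filteredness puts a single member of `𝒞` inside the union of the cover, and the
compactness of that member yields a finite subcover.
-/

universe u

/-- A saturated subset: an intersection of open sets. -/
def SaturatedSet {X : Type u} [TopologicalSpace X] (K : Set X) : Prop :=
  K = ⋂₀ {U : Set X | IsOpen U ∧ K ⊆ U}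

/-- A well-filtered topological space. -/
def WellFilteredSpace (X : Type u) [TopologicalSpace X] : Prop :=
  ∀ 𝒞 : Set (Set X), 𝒞.Nonempty →
    (∀ K ∈ 𝒞, IsCompact K ∧ SaturatedSet K) →
    DirectedOn (fun A B : Set X => B ⊆ A) 𝒞 →
    ∀ U : Set X, IsOpen U → ⋂₀ 𝒞 ⊆ U → ∃ K ∈ 𝒞, K ⊆ U

/-- A coherent space: binary intersections of compact saturated sets are compact. -/
def CoherentTopSpace (X : Type u) [TopologicalSpace X] : Prop :=
  ∀ K₁ K₂ : Set X, IsCompact K₁ → SaturatedSet K₁ → IsCompact K₂ → SaturatedSet K₂ →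
    IsCompact (K₁ ∩ K₂)

theorem SaturatedSet.sInter {X : Type u} [TopologicalSpace X] {𝒮 : Set (Set X)}
    (h𝒮 : ∀ K ∈ 𝒮, SaturatedSet K) : SaturatedSet (⋂₀ 𝒮) := by
  refine subset_antisymm (fun x hx U hU => hU.2 hx) fun x hx K hK => ?_
  rw [h𝒮 K hK]
  exact fun U hU => hx U ⟨hU.1, (Set.sInter_subset_of_mem hK).trans hU.2⟩

theorem CoherentTopSpace.infClosed {X : Type u} [TopologicalSpace X]
    (hcoh : CoherentTopSpace X) : InfClosed {K : Set X | IsCompact K ∧ SaturatedSet K} := by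
  rintro K₁ ⟨hK₁, hK₁sat⟩ K₂ ⟨hK₂, hK₂sat⟩
  refine ⟨hcoh K₁ K₂ hK₁ hK₁sat hK₂ hK₂sat, ?_⟩
  show SaturatedSet (K₁ ∩ K₂)
  rw [← Set.sInter_pair]
  exact SaturatedSet.sInter (by simp [hK₁sat, hK₂sat])

theorem WellFilteredSpace.isCompact_sInter {X : Type u} [TopologicalSpace X]
    (hw : WellFilteredSpace X) {𝒞 : Set (Set X)} (hne : 𝒞.Nonempty)
    (h𝒞 : ∀ K ∈ 𝒞, IsCompact K ∧ SaturatedSet K)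
    (hdir : DirectedOn (fun A B : Set X => B ⊆ A) 𝒞) : IsCompact (⋂₀ 𝒞) := by
  refine isCompact_of_finite_subcover fun U hU hcover => ?_
  obtain ⟨K, hK, hKU⟩ := hw 𝒞 hne h𝒞 hdir _ (isOpen_iUnion hU) hcover
  obtain ⟨t, ht⟩ := (h𝒞 K hK).1.elim_finite_subcover U hU hKU
  exact ⟨t, (Set.sInter_subset_of_mem hK).trans ht⟩

theorem sInter_infClosure {α : Type*} (𝒮 : Set (Set α)) : ⋂₀ infClosure 𝒮 = ⋂₀ 𝒮 :=
  (isGLB_sInf _).unique (isGLB_infClosure.2 (isGLB_sInf 𝒮))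

theorem wf_coherent_sInter_compact_saturated_general {X : Type u} [TopologicalSpace X]
    (hw : WellFilteredSpace X) (hcoh : CoherentTopSpace X)
    (𝒮 : Set (Set X)) (hne : 𝒮.Nonempty)
    (h : ∀ K ∈ 𝒮, IsCompact K ∧ SaturatedSet K) :
    IsCompact (⋂₀ 𝒮) ∧ SaturatedSet (⋂₀ 𝒮) := by
  refine ⟨?_, SaturatedSet.sInter fun K hK => (h K hK).2⟩
  have hclosure : ∀ K ∈ infClosure 𝒮, IsCompact K ∧ SaturatedSet K :=
    infClosure_min (fun K hK => h K hK) hcoh.infClosed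
  rw [← sInter_infClosure]
  exact hw.isCompact_sInter (hne.mono subset_infClosure) hclosure
    infClosed_infClosure.codirectedOn

theorem wf_coherent_sInter_compact_saturated {X : Type u} [TopologicalSpace X]
    [T0Space X] (hw : WellFilteredSpace X) (hcoh : CoherentTopSpace X)
    (𝒮 : Set (Set X)) (hne : 𝒮.Nonempty)
    (h : ∀ K ∈ 𝒮, IsCompact K ∧ SaturatedSet K) :
    IsCompact (⋂₀ 𝒮) ∧ SaturatedSet (⋂₀ 𝒮) :=
  wf_coherent_sInter_compact_saturated_general hw hcoh 𝒮 hne h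
end

section
/- Let P be a consonant poset. Then for every open subset 𝒰 of σ(P) in the Scott topology of the lattice σ(P) of Scott open sets, and for every family of the form { V ∈ σ(P) : V ∩ A ≠ ∅ for all A ∈ 𝒦 } where 𝒦 is a compact saturated subset of Γ(P) with the Scott topology, this family is Scott open in σ(P). -/
universe u

/-- A consonant poset. -/
def ConsonantPoset (P : Type u) [Preorder P] : Prop :=
  ∀ 𝒰 : Set (OpenSet P), ScottOpen 𝒰 → ∀ U ∈ 𝒰,
    ∃ K : Set P, ScottCompact K ∧ IsUpperSet K ∧
      K ⊆ U.carrier ∧ {V : OpenSet P | K ⊆ V.carrier} ⊆ 𝒰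

/-!
A Scott open `V` meets every member of `𝒦` exactly when `𝒦 ⊆ ◊V`. The sets `◊W` are Scott open
in `Γ(P)`, monotone in `W`, and the directed supremum of a family `d` of Scott opens is contained
in its union, so `◊(sup d) ⊆ ⋃ W ∈ d, ◊W`. Compactness of `𝒦` and directedness of `d` then give
a single `W ∈ d` with `𝒦 ⊆ ◊W`.
-/

open Set

theorem DirectedOn.exists_mem_forall_le_of_finite {ι : Type*} [Preorder ι] {s t : Set ι}
    (hd : DirectedOn (· ≤ ·) s) (hs : s.Nonempty) (ht : t.Finite) (hts : t ⊆ s) :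
    ∃ b ∈ s, ∀ a ∈ t, a ≤ b := by
  have := hs.to_subtype
  obtain ⟨b, hb⟩ := hd.directed_val.finset_le (ht.preimage Subtype.val_injective.injOn).toFinset
  exact ⟨b, b.2, fun a ha => hb ⟨a, hts ha⟩ (by simpa using ha)⟩

section Scott

variable {α : Type u} [Preorder α]

theorem ScottOpen.scottClosed_compl {W : Set α} (hW : ScottOpen W) : ScottClosed Wᶜ := by
  refine ⟨hW.1.compl, fun d hdW hne hdir a ha haW => ?_⟩
  obtain ⟨x, hxd, hxW⟩ := hW.2 d hne hdir a ha haW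
  exact hdW hxd hxW

theorem scottOpen_biUnion {ι : Type*} {d : Set ι} {f : ι → Set α}
    (hf : ∀ i ∈ d, ScottOpen (f i)) : ScottOpen (⋃ i ∈ d, f i) := by
  refine ⟨isUpperSet_iUnion₂ fun i hi => (hf i hi).1, fun e hne hdir a ha haf => ?_⟩
  obtain ⟨i, hi, hai⟩ := mem_iUnion₂.1 haf
  obtain ⟨x, hxe, hxi⟩ := (hf i hi).2 e hne hdir a ha hai
  exact ⟨x, hxe, mem_iUnion₂.2 ⟨i, hi, hxi⟩⟩

theorem ScottCompact.exists_mem_subset_of_directedOn {ι : Type*} [Preorder ι] {K : Set α}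
    (hK : ScottCompact K) {d : Set ι} (hne : d.Nonempty) (hdir : DirectedOn (· ≤ ·) d)
    {f : ι → Set α} (hf : Monotone f) (hopen : ∀ i ∈ d, ScottOpen (f i))
    (hcover : K ⊆ ⋃ i ∈ d, f i) : ∃ i ∈ d, K ⊆ f i := by
  obtain ⟨G, hGd, hGfin, hKG⟩ : ∃ G ⊆ d, G.Finite ∧ K ⊆ ⋃₀ (f '' G) :=
    exists_subset_image_finite_and.1 <|
      hK (f '' d) (forall_mem_image.2 hopen) (by rwa [sUnion_image])
  obtain ⟨i, hid, hGi⟩ := hdir.exists_mem_forall_le_of_finite hne hGfin hGd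
  refine ⟨i, hid, hKG.trans <| sUnion_subset ?_⟩
  exact forall_mem_image.2 fun j hj => hf (hGi j hj)

end Scott

namespace OpenSet

variable {P : Type u} [Preorder P]

theorem carrier_subset_biUnion_of_isLUB {d : Set (OpenSet P)} {V : OpenSet P}
    (hV : IsLUB d V) : V.carrier ⊆ ⋃ W ∈ d, W.carrier :=
  hV.2 (show (⟨_, scottOpen_biUnion fun W _ => W.open'⟩ : OpenSet P) ∈ upperBounds d from
    fun _ hW => subset_biUnion_of_mem (u := OpenSet.carrier) hW)

/-- The lower Vietoris subbasic open `◊W`. -/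
def diamond (W : OpenSet P) : Set (HPoset P) :=
  {A | (W.carrier ∩ A.carrier).Nonempty}

theorem diamond_mono : Monotone (diamond : OpenSet P → Set (HPoset P)) :=
  fun _ _ hWW' _ hA => hA.mono (inter_subset_inter_left _ hWW')

theorem scottOpen_diamond (W : OpenSet P) : ScottOpen W.diamond := by
  refine ⟨fun A B hAB hA => hA.mono (inter_subset_inter_right _ hAB), ?_⟩
  intro d _ _ A hA hAW
  by_contra hdW
  have hd : ∀ C ∈ d, C ≤ (⟨W.carrierᶜ, W.open'.scottClosed_compl⟩ : HPoset P) :=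
    fun C hC x hxC hxW => hdW ⟨C, hC, x, hxW, hxC⟩
  obtain ⟨x, hxW, hxA⟩ := hAW
  exact hA.2 hd hxA hxW

end OpenSet

theorem consonant_triangle_inter_scottOpen_general {P : Type u} [PartialOrder P]
    (𝒦 : Set (HPoset P)) (hc : ScottCompact 𝒦) :
    ScottOpen {V : OpenSet P | ∀ A ∈ 𝒦, (V.carrier ∩ A.carrier).Nonempty} := by
  refine ⟨fun V V' hVV' hV A hA => OpenSet.diamond_mono hVV' (hV A hA), ?_⟩
  intro d hne hdir V hV h𝒦V
  have hcover : 𝒦 ⊆ ⋃ W ∈ d, W.diamond := by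
    intro A hA
    obtain ⟨x, hxV, hxA⟩ := h𝒦V A hA
    obtain ⟨W, hWd, hxW⟩ := mem_iUnion₂.1 (OpenSet.carrier_subset_biUnion_of_isLUB hV hxV)
    exact mem_iUnion₂.2 ⟨W, hWd, x, hxW, hxA⟩
  obtain ⟨W, hWd, h𝒦W⟩ := hc.exists_mem_subset_of_directedOn hne hdir OpenSet.diamond_mono
    (fun W _ => OpenSet.scottOpen_diamond W) hcover
  exact ⟨W, hWd, h𝒦W⟩

theorem consonant_triangle_inter_scottOpen {P : Type u} [PartialOrder P]
    (hcons : ConsonantPoset P)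
    (𝒦 : Set (HPoset P)) (hc : ScottCompact 𝒦) (hu : IsUpperSet 𝒦) :
    ScottOpen {V : OpenSet P | ∀ A ∈ 𝒦, (V.carrier ∩ A.carrier).Nonempty} :=
  consonant_triangle_inter_scottOpen_general 𝒦 hc
end

section
/- A T0 topological space X is consonant if and only if it has property (KC): for every compact saturated subset 𝒦 of (Γ(X), lower Vietoris topology) and every open U ⊆ X meeting all members of 𝒦, there is a compact saturated K ⊆ U meeting all members of 𝒦. -/
universe u

/-- The lower Vietoris topology on the closed subsets of a space. -/
def lowerVietoris (X : Type u) [TopologicalSpace X] :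
    TopologicalSpace (TopologicalSpace.Closeds X) :=
  TopologicalSpace.generateFrom
    {S | ∃ U : Set X, IsOpen U ∧
      S = {C : TopologicalSpace.Closeds X | ((C : Set X) ∩ U).Nonempty}}

/-- A consonant topological space. -/
def ConsonantSpace (X : Type u) [TopologicalSpace X] : Prop :=
  ∀ 𝒰 : Set (TopologicalSpace.Opens X), ScottOpen 𝒰 → ∀ U ∈ 𝒰,
    ∃ K : Set X, IsCompact K ∧ SaturatedSet K ∧
      K ⊆ (U : Set X) ∧ {V : TopologicalSpace.Opens X | K ⊆ (V : Set X)} ⊆ 𝒰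

/-!
Scott open families `𝒰 ⊆ 𝒪(X)` and compact saturated `𝒦 ⊆ Γ(X)` correspond via
`𝒦 ↦ {V | 𝒦 ⊆ ◊V}` and `𝒰 ↦ ⋂_{V ∈ 𝒰} ◊V`, and `Φ(K) ⊆ 𝒰` says exactly that `K` meets every
member of `⋂_{V ∈ 𝒰} ◊V`; so consonance and (KC) are the same condition.
Compactness of `⋂_{V ∈ 𝒰} ◊V` is where Scott openness enters: an ultrafilter `f` on it converges
to its lower limit `L`, and if `L` missed some `V ∈ 𝒰`, then `Lᶜ ∈ 𝒰` would be the directed union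
of the opens `W` with `◊W ∉ f`, so one of them would lie in `𝒰`, although `◊W` contains the whole
family.
-/

open TopologicalSpace Set Filter Topology

namespace TopologicalSpace.Closeds

variable {X : Type u} [TopologicalSpace X]

/-- The subbasic open `◊U` of the lower Vietoris topology. -/
def hitting (U : Set X) : Set (Closeds X) := {C | ((C : Set X) ∩ U).Nonempty}

lemma hitting_mono {U V : Set X} (h : U ⊆ V) : hitting U ⊆ hitting V :=
  fun _ hC => hC.mono (inter_subset_inter_right _ h)

lemma notMem_hitting_iff {C : Closeds X} {U : Set X} :
    C ∉ hitting U ↔ U ⊆ (C : Set X)ᶜ := by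
  rw [subset_compl_iff_disjoint_left, disjoint_iff_inter_eq_empty]
  exact not_nonempty_iff_eq_empty

lemma notMem_hitting_compl (C : Closeds X) : C ∉ hitting (C : Set X)ᶜ :=
  notMem_hitting_iff.2 subset_rfl

lemma compl_notMem_hitting_iff {V W : Opens X} : V.compl ∉ hitting (W : Set X) ↔ W ≤ V := by
  rw [notMem_hitting_iff, Opens.coe_compl, _root_.compl_compl]
  rfl

lemma hitting_iUnion {ι : Sort*} (U : ι → Set X) :
    hitting (⋃ i, U i) = ⋃ i, hitting (U i) := by
  ext C
  simp only [hitting, mem_iUnion, inter_iUnion, nonempty_iUnion]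
  rfl

lemma hitting_union (U V : Set X) : hitting (U ∪ V) = hitting U ∪ hitting V := by
  ext C
  simp only [hitting, mem_union, inter_union_distrib_left, union_nonempty]
  rfl

lemma hitting_empty : hitting (∅ : Set X) = ∅ := by
  ext C
  simp [hitting]

lemma isOpen_hitting {U : Set X} (hU : IsOpen U) : IsOpen[lowerVietoris X] (hitting U) :=
  isOpen_generateFrom_of_mem ⟨U, hU, rfl⟩

lemma scottOpen_setOf_subset_hitting {𝒦 : Set (Closeds X)}
    (h𝒦 : @IsCompact _ (lowerVietoris X) 𝒦) :
    ScottOpen {V : Opens X | 𝒦 ⊆ hitting V} := by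
  refine ⟨fun V W hVW hV => hV.trans (hitting_mono hVW), ?_⟩
  intro d hd hdir s hs hs𝒦
  have : Nonempty d := hd.to_subtype
  have hs_eq : (s : Set X) = ⋃ V : d, (V : Set X) := by
    rw [← hs.sSup_eq, Opens.coe_sSup, biUnion_eq_iUnion]
  have hcover : 𝒦 ⊆ ⋃ V : d, hitting (V : Set X) := by
    rwa [← hitting_iUnion, ← hs_eq]
  obtain ⟨⟨V, hVd⟩, hV⟩ := @IsCompact.elim_directed_cover _ (lowerVietoris X) _ _ _ h𝒦 _
    (fun V => isOpen_hitting V.1.2) hcover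
    ((directedOn_iff_directed.1 hdir).mono_comp _ (g := fun V : Opens X => hitting (V : Set X))
      fun _ _ h => hitting_mono h)
  exact ⟨V, hVd, hV⟩

def transversals (𝒰 : Set (Opens X)) : Set (Closeds X) := ⋂ V ∈ 𝒰, hitting (V : Set X)

lemma transversals_eq_sInter_isOpen (𝒰 : Set (Opens X)) :
    transversals 𝒰 =
      ⋂₀ {𝒲 | IsOpen[lowerVietoris X] 𝒲 ∧ transversals 𝒰 ⊆ 𝒲} :=
  subset_antisymm (subset_sInter fun _ h => h.2) fun _ hA =>
    mem_iInter₂.2 fun V hV => hA _ ⟨isOpen_hitting V.2, iInter₂_subset V hV⟩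

lemma compl_mem_transversals {𝒰 : Set (Opens X)} (h𝒰 : IsUpperSet 𝒰) {V : Opens X}
    (hV : V ∉ 𝒰) : V.compl ∈ transversals 𝒰 :=
  mem_iInter₂.2 fun _ hW => by_contra fun hWV =>
    hV (h𝒰 (compl_notMem_hitting_iff.1 hWV) hW)

def missedOpens (f : Ultrafilter (Closeds X)) : Set (Opens X) := {V | hitting (V : Set X) ∉ f}

lemma bot_mem_missedOpens (f : Ultrafilter (Closeds X)) : ⊥ ∈ missedOpens f := by
  simp [missedOpens, hitting_empty]

lemma directedOn_missedOpens (f : Ultrafilter (Closeds X)) :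
    DirectedOn (· ≤ ·) (missedOpens f) := by
  intro V hV W hW
  refine ⟨V ⊔ W, ?_, le_sup_left, le_sup_right⟩
  simp only [missedOpens, mem_ofPred_eq, Opens.coe_sup, hitting_union,
    Ultrafilter.union_mem_iff] at hV hW ⊢
  tauto

/-- The points all of whose open neighbourhoods `V` satisfy `◊V ∈ f`. -/
def lowerLimit (f : Ultrafilter (Closeds X)) : Closeds X := (sSup (missedOpens f)).compl

lemma le_nhds_lowerLimit (f : Ultrafilter (Closeds X)) :
    (f : Filter (Closeds X)) ≤ @nhds _ (lowerVietoris X) (lowerLimit f) := by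
  rw [lowerVietoris, nhds_generateFrom]
  refine le_iInf₂ ?_
  rintro _ ⟨hL, U, hU, rfl⟩
  rw [le_principal_iff]
  by_contra hf
  obtain ⟨x, hxL, hxU⟩ := hL
  apply hxL
  rw [Opens.coe_sSup]
  exact mem_biUnion (x := ⟨U, hU⟩) hf hxU

lemma isCompact_transversals {𝒰 : Set (Opens X)} (h𝒰 : ScottOpen 𝒰) :
    @IsCompact _ (lowerVietoris X) (transversals 𝒰) := by
  rw [@isCompact_iff_ultrafilter_le_nhds]
  intro f hf
  rw [le_principal_iff] at hf
  refine ⟨lowerLimit f, mem_iInter₂.2 fun W hW => by_contra fun hLW => ?_, le_nhds_lowerLimit f⟩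
  have hW_le : W ≤ sSup (missedOpens f) := compl_notMem_hitting_iff.1 hLW
  obtain ⟨V, hVf, hV𝒰⟩ := h𝒰.2 _ ⟨⊥, bot_mem_missedOpens f⟩ (directedOn_missedOpens f) _
    (isLUB_sSup _) (h𝒰.1 hW_le hW)
  exact hVf (mem_of_superset hf (iInter₂_subset V hV𝒰))

end TopologicalSpace.Closeds

theorem consonant_iff_KC_general (X : Type u) [TopologicalSpace X] :
    ConsonantSpace X ↔
    (∀ 𝒦 : Set (TopologicalSpace.Closeds X),
      @IsCompact _ (lowerVietoris X) 𝒦 →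
      (𝒦 = ⋂₀ {𝒰 : Set (TopologicalSpace.Closeds X) |
        @IsOpen _ (lowerVietoris X) 𝒰 ∧ 𝒦 ⊆ 𝒰}) →
      ∀ U : Set X, IsOpen U → (∀ A ∈ 𝒦, (U ∩ (A : Set X)).Nonempty) →
      ∃ K : Set X, IsCompact K ∧ SaturatedSet K ∧ K ⊆ U ∧
        ∀ A ∈ 𝒦, (K ∩ (A : Set X)).Nonempty) := by
  constructor
  · intro hcons 𝒦 h𝒦 _ U hU hU𝒦
    obtain ⟨K, hK, hKsat, hKU, hKΦ⟩ :=
      hcons _ (Closeds.scottOpen_setOf_subset_hitting h𝒦) ⟨U, hU⟩ fun A hA =>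
        (hU𝒦 A hA).mono (inter_comm U A).subset
    refine ⟨K, hK, hKsat, hKU, fun A hA => by_contra fun hKA => ?_⟩
    have hK_sub : K ⊆ A.compl := subset_compl_iff_disjoint_right.2
      (disjoint_iff_inter_eq_empty.2 (not_nonempty_iff_eq_empty.1 hKA))
    exact Closeds.notMem_hitting_compl A (hKΦ hK_sub hA)
  · intro hKC 𝒰 h𝒰 U hU
    obtain ⟨K, hK, hKsat, hKU, hK𝒦⟩ :=
      hKC (Closeds.transversals 𝒰) (Closeds.isCompact_transversals h𝒰)
        (Closeds.transversals_eq_sInter_isOpen 𝒰) U U.2 fun A hA =>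
          (mem_iInter₂.1 hA U hU).mono (inter_comm _ _).subset
    refine ⟨K, hK, hKsat, hKU, fun V hKV => by_contra fun hV => ?_⟩
    obtain ⟨x, hxK, hxV⟩ := hK𝒦 _ (Closeds.compl_mem_transversals h𝒰.1 hV)
    exact hxV (hKV hxK)

theorem consonant_iff_KC (X : Type u) [TopologicalSpace X] [T0Space X] :
    ConsonantSpace X ↔
    (∀ 𝒦 : Set (TopologicalSpace.Closeds X),
      @IsCompact _ (lowerVietoris X) 𝒦 →
      (𝒦 = ⋂₀ {𝒰 : Set (TopologicalSpace.Closeds X) |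
        @IsOpen _ (lowerVietoris X) 𝒰 ∧ 𝒦 ⊆ 𝒰}) →
      ∀ U : Set X, IsOpen U → (∀ A ∈ 𝒦, (U ∩ (A : Set X)).Nonempty) →
      ∃ K : Set X, IsCompact K ∧ SaturatedSet K ∧ K ⊆ U ∧
        ∀ A ∈ 𝒦, (K ∩ (A : Set X)).Nonempty) :=
  consonant_iff_KC_general X
end

section
/- Let L be a well-filtered dcpo such that (i) the Scott topology on Q(L) is contained in the upper Vietoris topology, and (ii) L has property (KC). Then the maps φ : H(Q(L)) → Q(H(L)) and ψ : Q(H(L)) → H(Q(L)) given by φ(𝒜) = { A ∈ H(L) : ∀K ∈ 𝒜, A ∩ K ≠ ∅ } and ψ(𝒦) = { K ∈ Q(L) : ∀A ∈ 𝒦, K ∩ A ≠ ∅ } are mutually inverse order isomorphisms. -/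
/-! Both composites are inflationary for trivial reasons, so the content is the reverse inclusions,
each proved by contradiction with a complement. If `K ∈ ψ(φ(𝒜)) \ 𝒜`, the upper Vietoris hypothesis
gives a Scott open `U ⊇ K` with `□U` disjoint from `𝒜`; then `Uᶜ ∈ φ(𝒜)`, yet `K` misses `Uᶜ`.
If `A ∈ φ(ψ(𝒦)) \ 𝒦`, the open set `Aᶜ` meets every member of the upper set `𝒦`, so (KC) yields a
compact saturated `K ⊆ Aᶜ` in `ψ(𝒦)`, yet `A` misses `K`. Order reflection follows from `ψ ∘ φ = id`. -/

universe u

/-- The map φ : H(Q(L)) → Q(H(L)) on underlying subsets. -/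
def phiMap {L : Type u} [Preorder L] (𝒜 : Set (QPoset L)) : Set (HPoset L) :=
  {A : HPoset L | ∀ K ∈ 𝒜, (A.carrier ∩ K.carrier).Nonempty}

/-- The map ψ : Q(H(L)) → H(Q(L)) on underlying subsets. -/
def psiMap {L : Type u} [Preorder L] (𝒦 : Set (HPoset L)) : Set (QPoset L) :=
  {K : QPoset L | ∀ A ∈ 𝒦, (K.carrier ∩ A.carrier).Nonempty}

open Set

lemma ScottClosed.scottOpen_compl {α : Type u} [Preorder α] {C : Set α} (h : ScottClosed C) :
    ScottOpen Cᶜ := by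
  refine ⟨h.1.compl, fun d hdne hdir a hlub ha => ?_⟩
  by_contra hdC
  exact ha (h.2 d (fun x hx => not_not.mp fun hxC => hdC ⟨x, hx, hxC⟩) hdne hdir a hlub)

lemma ScottOpen.scottClosed_compl_s12 {α : Type u} [Preorder α] {U : Set α} (h : ScottOpen U) :
    ScottClosed Uᶜ := by
  refine ⟨h.1.compl, fun d hd hdne hdir a hlub ha => ?_⟩
  obtain ⟨x, hxd, hxU⟩ := h.2 d hdne hdir a hlub ha
  exact hd hxd hxU

section PowerMaps

variable {L : Type u} [Preorder L]

lemma phiMap_anti {𝒜 𝒜' : Set (QPoset L)} (h : 𝒜 ⊆ 𝒜') : phiMap 𝒜' ⊆ phiMap 𝒜 :=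
  fun _ hA K hK => hA K (h hK)

lemma psiMap_anti {𝒦 𝒦' : Set (HPoset L)} (h : 𝒦 ⊆ 𝒦') : psiMap 𝒦' ⊆ psiMap 𝒦 :=
  fun _ hK A hA => hK A (h hA)

lemma subset_psiMap_phiMap (𝒜 : Set (QPoset L)) : 𝒜 ⊆ psiMap (phiMap 𝒜) :=
  fun K hK _ hA => inter_comm K.carrier _ ▸ hA K hK

lemma subset_phiMap_psiMap (𝒦 : Set (HPoset L)) : 𝒦 ⊆ phiMap (psiMap 𝒦) :=
  fun A hA _ hK => inter_comm A.carrier _ ▸ hK A hA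

lemma psiMap_phiMap_subset
    (hUV : ∀ 𝒰 : Set (QPoset L), ScottOpen 𝒰 → ∀ K ∈ 𝒰, ∃ U : Set L, ScottOpen U ∧
      K.carrier ⊆ U ∧ {K' : QPoset L | K'.carrier ⊆ U} ⊆ 𝒰)
    {𝒜 : Set (QPoset L)} (h𝒜 : ScottClosed 𝒜) : psiMap (phiMap 𝒜) ⊆ 𝒜 := by
  intro K hK
  by_contra hK𝒜
  obtain ⟨U, hU, hKU, hbox⟩ := hUV 𝒜ᶜ h𝒜.scottOpen_compl K hK𝒜
  have hUc : (⟨Uᶜ, hU.scottClosed_compl_s12⟩ : HPoset L) ∈ phiMap 𝒜 := fun K' hK' => by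
    rw [inter_comm, inter_compl_nonempty_iff]
    exact fun hK'U => hbox hK'U hK'
  obtain ⟨x, hxK, hxU⟩ := hK _ hUc
  exact hxU (hKU hxK)

lemma phiMap_psiMap_subset
    (hKC : ∀ 𝒦 : Set (HPoset L), ScottCompact 𝒦 → IsUpperSet 𝒦 →
      ∀ U : Set L, ScottOpen U → (∀ A ∈ 𝒦, (U ∩ A.carrier).Nonempty) →
      ∃ K : Set L, ScottCompact K ∧ IsUpperSet K ∧ K ⊆ U ∧
        ∀ A ∈ 𝒦, (K ∩ A.carrier).Nonempty)
    {𝒦 : Set (HPoset L)} (hne : 𝒦.Nonempty) (hc : ScottCompact 𝒦) (hup : IsUpperSet 𝒦) :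
    phiMap (psiMap 𝒦) ⊆ 𝒦 := by
  intro A hA
  by_contra hA𝒦
  have hmeet : ∀ A' ∈ 𝒦, (A.carrierᶜ ∩ A'.carrier).Nonempty := fun A' hA' => by
    rw [inter_comm, inter_compl_nonempty_iff]
    exact fun hA'A => hA𝒦 (hup hA'A hA')
  obtain ⟨K, hKc, hKup, hKA, hK𝒦⟩ := hKC 𝒦 hc hup _ A.closed'.scottOpen_compl hmeet
  obtain ⟨A₀, hA₀⟩ := hne
  let K' : QPoset L := ⟨K, (hK𝒦 A₀ hA₀).mono inter_subset_left, hKc, hKup⟩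
  obtain ⟨x, hxA, hxK⟩ := hA K' hK𝒦
  exact hKA hxK hxA

end PowerMaps

theorem phi_psi_iso_of_KC_general {L : Type u} [PartialOrder L]
    (hUV : ∀ 𝒰 : Set (QPoset L), ScottOpen 𝒰 → ∀ K ∈ 𝒰, ∃ U : Set L, ScottOpen U ∧
      K.carrier ⊆ U ∧ {K' : QPoset L | K'.carrier ⊆ U} ⊆ 𝒰)
    (hKC : ∀ 𝒦 : Set (HPoset L), ScottCompact 𝒦 → IsUpperSet 𝒦 →
      ∀ U : Set L, ScottOpen U → (∀ A ∈ 𝒦, (U ∩ A.carrier).Nonempty) →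
      ∃ K : Set L, ScottCompact K ∧ IsUpperSet K ∧ K ⊆ U ∧
        ∀ A ∈ 𝒦, (K ∩ A.carrier).Nonempty) :
    (∀ 𝒜 : Set (QPoset L), ScottClosed 𝒜 → psiMap (phiMap 𝒜) = 𝒜) ∧
    (∀ 𝒦 : Set (HPoset L), 𝒦.Nonempty → ScottCompact 𝒦 → IsUpperSet 𝒦 →
      phiMap (psiMap 𝒦) = 𝒦) ∧
    (∀ 𝒜 𝒜' : Set (QPoset L), ScottClosed 𝒜 → ScottClosed 𝒜' →
      (𝒜 ⊆ 𝒜' ↔ phiMap 𝒜' ⊆ phiMap 𝒜)) := by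
  have hψφ : ∀ 𝒜 : Set (QPoset L), ScottClosed 𝒜 → psiMap (phiMap 𝒜) = 𝒜 := fun 𝒜 h𝒜 =>
    (psiMap_phiMap_subset hUV h𝒜).antisymm (subset_psiMap_phiMap 𝒜)
  refine ⟨hψφ, fun 𝒦 hne hc hup =>
    (phiMap_psiMap_subset hKC hne hc hup).antisymm (subset_phiMap_psiMap 𝒦), ?_⟩
  intro 𝒜 𝒜' h𝒜 h𝒜'
  refine ⟨phiMap_anti, fun h => ?_⟩
  rw [← hψφ 𝒜 h𝒜, ← hψφ 𝒜' h𝒜']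
  exact psiMap_anti h

theorem phi_psi_iso_of_KC {L : Type u} [PartialOrder L] (hd : IsDcpo L)
    (hw : WellFiltered L)
    (hUV : ∀ 𝒰 : Set (QPoset L), ScottOpen 𝒰 → ∀ K ∈ 𝒰, ∃ U : Set L, ScottOpen U ∧
      K.carrier ⊆ U ∧ {K' : QPoset L | K'.carrier ⊆ U} ⊆ 𝒰)
    (hKC : ∀ 𝒦 : Set (HPoset L), ScottCompact 𝒦 → IsUpperSet 𝒦 →
      ∀ U : Set L, ScottOpen U → (∀ A ∈ 𝒦, (U ∩ A.carrier).Nonempty) →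
      ∃ K : Set L, ScottCompact K ∧ IsUpperSet K ∧ K ⊆ U ∧
        ∀ A ∈ 𝒦, (K ∩ A.carrier).Nonempty) :
    (∀ 𝒜 : Set (QPoset L), ScottClosed 𝒜 → psiMap (phiMap 𝒜) = 𝒜) ∧
    (∀ 𝒦 : Set (HPoset L), 𝒦.Nonempty → ScottCompact 𝒦 → IsUpperSet 𝒦 →
      phiMap (psiMap 𝒦) = 𝒦) ∧
    (∀ 𝒜 𝒜' : Set (QPoset L), ScottClosed 𝒜 → ScottClosed 𝒜' →
      (𝒜 ⊆ 𝒜' ↔ phiMap 𝒜' ⊆ phiMap 𝒜)) :=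
  phi_psi_iso_of_KC_general hUV hKC
end

section
/- Let (M, α) be a Q-algebra in the category of well-filtered dcpos, where Q is the Smyth power monad with unit θ_M(x) = ↑x. Then every nonempty Scott compact saturated subset K of M has an infimum in M, and α(K) = inf K. -/
universe u

/-- An Eilenberg-Moore algebra of the Smyth power monad `Q`. -/
structure QAlgebra (M : Type u) [PartialOrder M] where
  map : QPoset M → M
  cont : ScottContinuous map
  unit : ∀ (x : M) (K : QPoset M), K.carrier = Set.Ici x → map K = x
  assoc : ∀ (𝒦 : QPoset (QPoset M)) (K K' : QPoset M),
    K.carrier = ⋃ J ∈ 𝒦.carrier, J.carrier →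
    K'.carrier = {y : M | ∃ J ∈ 𝒦.carrier, map J ≤ y} →
    map K = map K'


/-! Since `α` is monotone for reverse inclusion and fixes principal filters, `↑x` lies above `K`
in `Q(M)` for every `x ∈ K`, and below `K` for every lower bound `x` of `K`; applying `α` gives
`α K ≤ x` in the first case and `x ≤ α K` in the second. -/

theorem scottCompact_Ici {α : Type u} [Preorder α] (x : α) : ScottCompact (Set.Ici x) := by
  intro 𝒰 h𝒰 hcover
  obtain ⟨U, hU, hxU⟩ := hcover (Set.self_mem_Ici : x ∈ Set.Ici x)
  exact ⟨{U}, Set.singleton_subset_iff.mpr hU, Set.finite_singleton U,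
    fun y hy => ⟨U, rfl, (h𝒰 U hU).1 hy hxU⟩⟩

namespace QPoset

variable {α : Type u} [Preorder α]

def Ici (x : α) : QPoset α :=
  ⟨Set.Ici x, Set.nonempty_Ici, scottCompact_Ici x, isUpperSet_Ici x⟩

theorem le_Ici_iff {K : QPoset α} {x : α} : K ≤ Ici x ↔ x ∈ K.carrier :=
  ⟨fun h => h Set.self_mem_Ici, fun hx _ hy => K.upper' hy hx⟩

theorem Ici_le_iff {K : QPoset α} {x : α} : Ici x ≤ K ↔ x ∈ lowerBounds K.carrier :=
  Iff.rfl

end QPoset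

namespace QAlgebra

variable {M : Type u} [PartialOrder M] (a : QAlgebra M)

theorem map_Ici (x : M) : a.map (QPoset.Ici x) = x :=
  a.unit x _ rfl

theorem map_le_of_mem {K : QPoset M} {x : M} (hx : x ∈ K.carrier) : a.map K ≤ x :=
  a.map_Ici x ▸ a.cont.monotone (QPoset.le_Ici_iff.mpr hx)

theorem le_map_of_mem_lowerBounds {K : QPoset M} {x : M} (hx : x ∈ lowerBounds K.carrier) :
    x ≤ a.map K :=
  a.map_Ici x ▸ a.cont.monotone (QPoset.Ici_le_iff.mpr hx)

end QAlgebra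

theorem qAlgebra_map_isGLB_general {M : Type u} [PartialOrder M] (a : QAlgebra M) :
    ∀ K : QPoset M, IsGLB K.carrier (a.map K) :=
  fun _ => ⟨fun _ => a.map_le_of_mem, fun _ => a.le_map_of_mem_lowerBounds⟩

theorem qAlgebra_map_isGLB {M : Type u} [PartialOrder M] (hd : IsDcpo M)
    (hw : WellFiltered M) (a : QAlgebra M) :
    ∀ K : QPoset M, IsGLB K.carrier (a.map K) :=
  qAlgebra_map_isGLB_general a
end

section
/- Every Q-algebra homomorphism between Q-algebras over well-filtered dcpos preserves binary infima: if h : (L, α_L) → (M, α_M) satisfies h ∘ α_L = α_M ∘ Q(h), then h(x ∧ y) = h(x) ∧ h(y) for all x, y (these infima exist by the Q-algebra structure). -/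
universe u

/-!
The structure map of a `Q`-algebra sends every compact saturated set `K` to its infimum:
comparing `K` with `↑x` for `x ∈ K`, or with `↑c` for a lower bound `c`, and applying the unit
law `α(↑x) = x` gives both halves of `IsGLB`. For a homomorphism `h`, the image of `↑{x, y}`
under `Q(h)` is `↑{h x, h y}`, so
`h (x ⊓ y) = h (α ↑{x, y}) = α ↑{h x, h y} = h x ⊓ h y`.
-/

theorem Set.Finite.scottCompact_upperClosure {α : Type u} [Preorder α] {s : Set α}
    (hs : s.Finite) : ScottCompact (upperClosure s : Set α) := by
  intro 𝒰 h𝒰 hcover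
  choose! U hU𝒰 hmemU using fun a (ha : a ∈ s) => hcover (subset_upperClosure ha)
  refine ⟨U '' s, by rintro _ ⟨a, ha, rfl⟩; exact hU𝒰 a ha, hs.image U, ?_⟩
  rintro x ⟨a, ha, hax⟩
  exact ⟨U a, ⟨a, ha, rfl⟩, (h𝒰 (U a) (hU𝒰 a ha)).1 hax (hmemU a ha)⟩

namespace QPoset

variable {α : Type u} [PartialOrder α]

def ofFinite (s : Set α) (hs : s.Finite) (hne : s.Nonempty) : QPoset α where
  carrier := upperClosure s
  nonempty' := hne.mono subset_upperClosure
  compact' := hs.scottCompact_upperClosure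
  upper' := (upperClosure s).upper

/-- The unit `θ(x) = ↑x` of the monad. -/
def principal (x : α) : QPoset α :=
  ofFinite {x} (Set.finite_singleton x) (Set.singleton_nonempty x)

theorem principal_carrier (x : α) : (principal x).carrier = Set.Ici x := by
  simp [principal, ofFinite, upperClosure_singleton]

theorem principal_le_iff {x : α} {K : QPoset α} :
    principal x ≤ K ↔ K.carrier ⊆ Set.Ici x := by
  change K.carrier ⊆ (principal x).carrier ↔ _
  rw [principal_carrier]

theorem le_principal_iff {x : α} {K : QPoset α} : K ≤ principal x ↔ x ∈ K.carrier := by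
  change (principal x).carrier ⊆ K.carrier ↔ _
  rw [principal_carrier]
  exact ⟨fun hK => hK le_rfl, fun hx => K.upper'.Ici_subset hx⟩

end QPoset

namespace QAlgebra

variable {α : Type u} [PartialOrder α] (A : QAlgebra α)

theorem map_principal (x : α) : A.map (QPoset.principal x) = x :=
  A.unit x _ (QPoset.principal_carrier x)

theorem isGLB_map (K : QPoset α) : IsGLB K.carrier (A.map K) := by
  refine ⟨fun x hx => ?_, fun c hc => ?_⟩
  · calc A.map K ≤ A.map (QPoset.principal x) := A.cont.monotone (QPoset.le_principal_iff.2 hx)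
      _ = x := A.map_principal x
  · calc c = A.map (QPoset.principal c) := (A.map_principal c).symm
      _ ≤ A.map K := A.cont.monotone (QPoset.principal_le_iff.2 hc)

theorem isGLB_map_ofFinite {s : Set α} (hs : s.Finite) (hne : s.Nonempty) :
    IsGLB s (A.map (QPoset.ofFinite s hs hne)) := by
  have := A.isGLB_map (QPoset.ofFinite s hs hne)
  rwa [IsGLB, QPoset.ofFinite, lowerBounds_upperClosure] at this

end QAlgebra

theorem Monotone.setOf_exists_map_le_eq_upperClosure_image {α β : Type u} [Preorder α]
    [Preorder β] {h : α → β} (hmono : Monotone h) (s : Set α) :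
    {y : β | ∃ x ∈ (upperClosure s : Set α), h x ≤ y} = upperClosure (h '' s) := by
  ext y
  simp only [Set.mem_ofPred_eq, SetLike.mem_coe, mem_upperClosure, Set.exists_mem_image]
  constructor
  · rintro ⟨x, ⟨a, ha, hax⟩, hxy⟩
    exact ⟨a, ha, (hmono hax).trans hxy⟩
  · rintro ⟨a, ha, hay⟩
    exact ⟨a, ⟨a, ha, le_rfl⟩, hay⟩

theorem QAlgebra.isGLB_image_of_hom {L M : Type u} [PartialOrder L] [PartialOrder M]
    (aL : QAlgebra L) (aM : QAlgebra M) {h : L → M} (hmono : Monotone h)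
    (hhom : ∀ (K : QPoset L) (K' : QPoset M),
      K'.carrier = {y : M | ∃ x ∈ K.carrier, h x ≤ y} → h (aL.map K) = aM.map K')
    {s : Set L} (hs : s.Finite) (hne : s.Nonempty) {m : L} (hm : IsGLB s m) :
    IsGLB (h '' s) (h m) := by
  have hmap : aL.map (QPoset.ofFinite s hs hne) = m := (aL.isGLB_map_ofFinite hs hne).unique hm
  have hhom_m : h m = aM.map (QPoset.ofFinite (h '' s) (hs.image h) (hne.image h)) := by
    rw [← hmap]
    exact hhom _ _ (hmono.setOf_exists_map_le_eq_upperClosure_image s).symm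
  rw [hhom_m]
  exact aM.isGLB_map_ofFinite _ _

theorem qAlgebra_hom_preserves_binary_infs_general {L M : Type u} [PartialOrder L]
    [PartialOrder M]
    (aL : QAlgebra L) (aM : QAlgebra M) (h : L → M) (hcont : ScottContinuous h)
    (hhom : ∀ (K : QPoset L) (K' : QPoset M),
      K'.carrier = {y : M | ∃ x ∈ K.carrier, h x ≤ y} → h (aL.map K) = aM.map K') :
    ∀ (x y m : L), IsGLB {x, y} m → IsGLB {h x, h y} (h m) := by
  intro x y m hm
  rw [← Set.image_pair]
  exact QAlgebra.isGLB_image_of_hom aL aM hcont.monotone hhom (Set.toFinite _)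
    (Set.insert_nonempty x {y}) hm

theorem qAlgebra_hom_preserves_binary_infs {L M : Type u} [PartialOrder L]
    [PartialOrder M] (hdL : IsDcpo L) (hwL : WellFiltered L)
    (hdM : IsDcpo M) (hwM : WellFiltered M)
    (aL : QAlgebra L) (aM : QAlgebra M) (h : L → M) (hcont : ScottContinuous h)
    (hhom : ∀ (K : QPoset L) (K' : QPoset M),
      K'.carrier = {y : M | ∃ x ∈ K.carrier, h x ≤ y} → h (aL.map K) = aM.map K') :
    ∀ (x y m : L), IsGLB {x, y} m → IsGLB {h x, h y} (h m) :=
  qAlgebra_hom_preserves_binary_infs_general aL aM h hcont hhom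
end

section
/- Let 𝓛 be the poset of all nonempty co-countable subsets of [0,1] ordered by inclusion. Then 𝓛 is a dcpo in which every nonempty finite subset has a supremum (given by union), but the compact saturated subset K = { [0,1]∖{x} : x ∈ [0,1/2] } of Σ𝓛 has no infimum in 𝓛. -/
universe u

/-- Schalk's example: nonempty co-countable subsets of `[0,1]`, ordered by inclusion. -/
abbrev SchalkL : Type :=
  {A : Set unitInterval // A.Nonempty ∧ (Aᶜ).Countable}

/-- The (saturation of the) family `{ [0,1] ∖ {x} : x ∈ [0,1/2] }`. -/
def SchalkK : Set SchalkL :=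
  {B : SchalkL | ∃ x : unitInterval, (x : ℝ) ≤ 1 / 2 ∧ ({x}ᶜ : Set unitInterval) ⊆ B.1}

/-!
Unions of nonempty co-countable sets are again nonempty and co-countable, so nonempty
suprema in `𝓛` are unions. A Scott open set `U` containing some `A` contains all but finitely
many co-singletons `[0,1] ∖ {x}`: otherwise pick a countably infinite set `T` of such bad `x`;
then `A` is the directed union of the sets `A ∖ (T ∖ F)`, `F` finite, one of which lies in `U`,
yet it lies below `[0,1] ∖ {x}` for any bad `x ∈ T ∖ F`. So an open cover of `K` is reduced
to one member containing some co-singleton of `K` together with finitely many others.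
A lower bound of `K` omits every `x ≤ 1/2`, which no co-countable set does.
-/

open Set

theorem scottCompact_upperClosure {α : Type*} [Preorder α] {P : Set α}
    (hP : ∀ U, ScottOpen U → (P ∩ U).Nonempty → (P \ U).Finite) :
    ScottCompact (upperClosure P : Set α) := by
  intro 𝒰 h𝒰 hcov
  rcases P.eq_empty_or_nonempty with rfl | ⟨p₀, hp₀⟩
  · exact ⟨∅, empty_subset _, finite_empty, by simp⟩
  have hcovP : ∀ p ∈ P, ∃ V ∈ 𝒰, p ∈ V := fun p hp => hcov (subset_upperClosure hp)
  obtain ⟨U₀, hU₀, hp₀U₀⟩ := hcovP p₀ hp₀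
  have hfin : (P \ U₀).Finite := hP U₀ (h𝒰 U₀ hU₀) ⟨p₀, hp₀, hp₀U₀⟩
  choose! V hV𝒰 hpV using hcovP
  refine ⟨insert U₀ (V '' (P \ U₀)),
    insert_subset hU₀ (image_subset_iff.2 fun p hp => hV𝒰 p hp.1),
    (hfin.image V).insert U₀, ?_⟩
  intro b hb
  obtain ⟨p, hp, hpb⟩ := mem_upperClosure.1 hb
  by_cases hpU₀ : p ∈ U₀
  · exact ⟨U₀, mem_insert _ _, (h𝒰 U₀ hU₀).1 hpb hpU₀⟩
  · exact ⟨V p, mem_insert_of_mem _ (mem_image_of_mem V ⟨hp, hpU₀⟩),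
      (h𝒰 _ (hV𝒰 p hp)).1 hpb (hpV p hp)⟩

abbrev NonemptyCocountable (X : Type*) : Type _ :=
  {A : Set X // A.Nonempty ∧ Aᶜ.Countable}

namespace NonemptyCocountable

variable {X : Type*}

theorem exists_isLUB_eq_biUnion {S : Set (NonemptyCocountable X)} (hS : S.Nonempty) :
    ∃ z : NonemptyCocountable X, z.1 = ⋃ A ∈ S, A.1 ∧ IsLUB S z := by
  obtain ⟨A, hA⟩ := hS
  have hAsub : A.1 ⊆ ⋃ B ∈ S, B.1 := subset_biUnion_of_mem hA
  exact ⟨⟨_, A.2.1.mono hAsub, A.2.2.mono (compl_subset_compl.2 hAsub)⟩, rfl,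
    fun B hB => subset_biUnion_of_mem hB, fun z hz => iUnion₂_subset hz⟩

theorem isDcpo : IsDcpo (NonemptyCocountable X) :=
  fun _ hd _ => (exists_isLUB_eq_biUnion hd).imp fun _ => And.right

def diffCountable [Uncountable X] (A : NonemptyCocountable X) (T : Set X) (hT : T.Countable) :
    NonemptyCocountable X :=
  have hcompl : (A.1 \ T)ᶜ.Countable := by
    rw [compl_sdiff]
    exact hT.union A.2.2
  ⟨A.1 \ T, nonempty_iff_ne_empty.2 fun h => not_countable_univ (by simpa [h] using hcompl),
    hcompl⟩

section Nontrivial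

variable [Nontrivial X]

def coSingleton (x : X) : NonemptyCocountable X :=
  ⟨{x}ᶜ, exists_ne x, by simp⟩

theorem le_coSingleton_iff {A : NonemptyCocountable X} {x : X} :
    A ≤ coSingleton x ↔ x ∉ A.1 :=
  subset_compl_singleton_iff

theorem countable_of_mem_lowerBounds_image_coSingleton {S : Set X} {m : NonemptyCocountable X}
    (hm : m ∈ lowerBounds (coSingleton '' S)) : S.Countable :=
  m.2.2.mono fun _ hx => le_coSingleton_iff.1 (hm (mem_image_of_mem _ hx))

theorem not_exists_isGLB_upperClosure_image_coSingleton {S : Set X} (hS : ¬ S.Countable) :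
    ¬ ∃ m : NonemptyCocountable X, IsGLB (upperClosure (coSingleton '' S) : Set _) m := by
  rintro ⟨m, hm⟩
  rw [IsGLB, IsGreatest, lowerBounds_upperClosure] at hm
  exact hS (countable_of_mem_lowerBounds_image_coSingleton hm.1)

end Nontrivial

theorem finite_setOf_coSingleton_notMem [Uncountable X] {U : Set (NonemptyCocountable X)}
    (hU : ScottOpen U) {A : NonemptyCocountable X} (hA : A ∈ U) :
    {x | coSingleton x ∉ U}.Finite := by
  by_contra hinf
  obtain ⟨T, hTsub, hTc, hTinf⟩ := Infinite.exists_subset_countable_infinite hinf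
  let d : Finset X → NonemptyCocountable X := fun F =>
    A.diffCountable (T \ F) (hTc.mono sdiff_subset)
  have hd : Monotone d := fun F G hFG =>
    sdiff_subset_sdiff_right (sdiff_subset_sdiff_right (Finset.coe_subset.2 hFG))
  have hlub : IsLUB (range d) A :=
    ⟨forall_mem_range.2 fun _ => sdiff_subset,
      fun z hz a ha =>
        hz (mem_range_self {a}) ⟨ha, fun h => h.2 (Finset.mem_singleton_self a)⟩⟩
  obtain ⟨_, ⟨F, rfl⟩, hdF⟩ :=
    hU.2 _ (range_nonempty d) (directedOn_range.2 hd.directed_le) A hlub hA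
  obtain ⟨x, hxT, hxF⟩ := (hTinf.sdiff F.finite_toSet).nonempty
  have hdF_le : d F ≤ coSingleton x :=
    le_coSingleton_iff.2 fun h : x ∈ A.1 \ (T \ F) => h.2 ⟨hxT, hxF⟩
  exact hTsub hxT (hU.1 hdF_le hdF)

theorem scottCompact_upperClosure_image_coSingleton [Uncountable X] (S : Set X) :
    ScottCompact (upperClosure (coSingleton '' S) : Set (NonemptyCocountable X)) := by
  refine scottCompact_upperClosure fun U hU ⟨_, ⟨_, _, rfl⟩, hA⟩ => ?_
  refine ((finite_setOf_coSingleton_notMem hU hA).image coSingleton).subset ?_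
  rintro _ ⟨⟨x, _, rfl⟩, hx⟩
  exact mem_image_of_mem _ hx

end NonemptyCocountable

open NonemptyCocountable

theorem not_countable_setOf_le_half : ¬ {x : unitInterval | (x : ℝ) ≤ 1 / 2}.Countable := by
  intro h
  have hIcc : Icc (0 : ℝ) (1 / 2) ⊆ Subtype.val '' {x : unitInterval | (x : ℝ) ≤ 1 / 2} :=
    fun r hr => ⟨⟨r, hr.1, hr.2.trans (by norm_num)⟩, hr.2, rfl⟩
  have hle := Cardinal.Real.Icc_countable_iff.1 ((h.image _).mono hIcc)
  norm_num at hle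

instance : Uncountable unitInterval :=
  not_countable_univ_iff.1 fun h => not_countable_setOf_le_half (h.mono (subset_univ _))

theorem schalkK_eq :
    SchalkK = upperClosure (coSingleton '' {x : unitInterval | (x : ℝ) ≤ 1 / 2}) := by
  ext B
  simp only [SetLike.mem_coe, mem_upperClosure]
  constructor
  · rintro ⟨x, hx, hB⟩
    exact ⟨_, mem_image_of_mem _ hx, hB⟩
  · rintro ⟨_, ⟨x, hx, rfl⟩, hB⟩
    exact ⟨x, hx, hB⟩

theorem schalk_counterexample :
    IsDcpo SchalkL ∧
    (∀ S : Set SchalkL, S.Finite → S.Nonempty →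
      ∃ z : SchalkL, z.1 = (⋃ A ∈ S, A.1) ∧ IsLUB S z) ∧
    ScottCompact SchalkK ∧ IsUpperSet SchalkK ∧
    ¬ ∃ m : SchalkL, IsGLB SchalkK m := by
  rw [schalkK_eq]
  exact ⟨isDcpo, fun _ _ hS => exists_isLUB_eq_biUnion hS,
    scottCompact_upperClosure_image_coSingleton _, (upperClosure _).upper,
    not_exists_isGLB_upperClosure_image_coSingleton not_countable_setOf_le_half⟩
end
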